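/- arXiv:0904.0715 — 2 statements merged into one kernel-verified Lean document; each statement's English description precedes it below -/
import Mathlib

section
/- Consider the Ising model, i.e. I_x = I for all x ∈ ℤ with a fixed real I, let β > 0 and χ = e^{−2β I}. Writing X^r_n for the crystal partition function on an interval of n sites with minus boundary conditions (it depends only on the length n and on r, by translation invariance), one has for all n ≥ 3 and 1 ≤ r ≤ n: X^r_n = X^{r−1}_{n−1} + X^r_{n−1} + (χ − 1)·X^{r−1}_{n−2}, with the convention X^s_{n'} = 0 whenever s < 0 or s > n'. -/
open Finset

/-- Spin configurations on `{1, …, n}`, encoded as boolean functions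
(`true` ↔ spin `+1`, `false` ↔ spin `-1`). -/
abbrev Config (n : ℕ) := {x // x ∈ Finset.Icc 1 n} → Bool

/-- The spin value `±1` of the configuration `σ` at the site `x` (value `1` off the box). -/
noncomputable def spin {n : ℕ} (σ : Config n) (x : ℕ) : ℝ :=
  if h : x ∈ Finset.Icc 1 n then (if σ ⟨x, h⟩ then 1 else -1) else 1

/-- The number `N_+(σ)` of sites where `σ` takes the value `+1`. -/
def Nplus {n : ℕ} (σ : Config n) : ℕ :=
  (Finset.univ.filter fun x => σ x = true).card

/-- The Ising Hamiltonian `H^-` on `{1, …, n}` with minus boundary spin on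
both sides. -/
noncomputable def Hminus (I : ℝ) (n : ℕ) (σ : Config n) : ℝ :=
  I * ((∑ x ∈ Finset.Icc 2 n, (if spin σ (x - 1) ≠ spin σ x then 1 else 0))
        + (if spin σ 1 ≠ -1 then 1 else 0)
        + (if spin σ n ≠ -1 then 1 else 0))

/-- The crystal partition function `X^r_n` of the Ising model (minus boundary
on both sides), defined for every integer `r`; it vanishes automatically when
`r < 0` or `r > n`. -/
noncomputable def X (β I : ℝ) (n : ℕ) (r : ℤ) : ℝ :=
  ∑ σ ∈ Finset.univ.filter (fun σ : Config n => (Nplus σ : ℤ) = r),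
    Real.exp (-β * Hminus I n σ)

/-! Appending a spin to a configuration on `{1, …, m}` only changes the bonds at the right end:
appending `-1` costs nothing, appending `+1` costs nothing after a `+1` and `2I` (a factor `χ`)
after a `-1`. Hence `X^r_{m+1} = X^r_m + X^{r-1}_m + (χ - 1) X^{r-1,-}_m`, where `X^{s,-}_m` is the
part of `X^s_m` coming from configurations ending in `-1`; the same bookkeeping gives
`X^{s,-}_{m+1} = X^s_m`, and substituting this into the first identity at `m + 1` gives the
recursion. -/

namespace Config

variable {m : ℕ}

lemma top_mem_Icc : m + 1 ∈ Icc 1 (m + 1) := by simp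

lemma mem_Icc_succ {x : ℕ} (hx : x ∈ Icc 1 m) : x ∈ Icc 1 (m + 1) := by
  simp only [mem_Icc] at *; omega

def snoc (σ : Config m) (b : Bool) : Config (m + 1) :=
  fun x => if h : (x : ℕ) ∈ Icc 1 m then σ ⟨x, h⟩ else b

def init (τ : Config (m + 1)) : Config m :=
  fun x => τ ⟨x, mem_Icc_succ x.2⟩

def snocEquiv : Config m × Bool ≃ Config (m + 1) where
  toFun p := snoc p.1 p.2
  invFun τ := (init τ, τ ⟨m + 1, top_mem_Icc⟩)
  left_inv p := by
    obtain ⟨σ, b⟩ := p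
    ext x
    · simp [init, snoc, x.2]
    · simp [snoc]
  right_inv τ := by
    funext x
    by_cases h : (x : ℕ) ∈ Icc 1 m
    · simp [snoc, init, h]
    · have hx : (x : ℕ) = m + 1 := by
        have := x.2; simp only [mem_Icc] at h this; omega
      simp only [snoc, h, dite_false]
      exact congrArg τ (Subtype.ext hx.symm)

lemma sum_succ {M : Type*} [AddCommMonoid M] (g : Config (m + 1) → M) :
    ∑ τ, g τ = ∑ σ : Config m, (g (snoc σ true) + g (snoc σ false)) := by
  rw [← snocEquiv.sum_comp, Fintype.sum_prod_type]
  simp only [Fintype.sum_bool]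
  rfl

end Config

open Config

section

variable {m : ℕ}

lemma spin_eq_one_or_neg_one {n : ℕ} (σ : Config n) (x : ℕ) :
    spin σ x = 1 ∨ spin σ x = -1 := by
  unfold spin; split_ifs <;> simp

lemma spin_snoc_of_le (σ : Config m) (b : Bool) {x : ℕ} (hx : x ≤ m) :
    spin (snoc σ b) x = spin σ x := by
  by_cases h : x ∈ Icc 1 m
  · simp [spin, snoc, h, mem_Icc_succ h]
  · have h' : x ∉ Icc 1 (m + 1) := by simp only [mem_Icc] at *; omega
    simp [spin, h, h']

lemma spin_snoc_self (σ : Config m) (b : Bool) :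
    spin (snoc σ b) (m + 1) = if b then 1 else -1 := by
  simp [spin, snoc]

lemma Nplus_eq_card_spin {n : ℕ} (σ : Config n) :
    Nplus σ = #{x ∈ Icc 1 n | spin σ x = 1} := by
  refine card_bij (fun x _ => x.1) (fun x hx => ?_) (fun x _ y _ => Subtype.ext) fun x hx => ?_
  · have hx : σ x = true := (mem_filter.1 hx).2
    simp [spin, x.2, hx]
  · obtain ⟨hx, hs⟩ := mem_filter.1 hx
    refine ⟨⟨x, hx⟩, mem_filter.2 ⟨mem_univ _, ?_⟩, rfl⟩
    by_contra h
    norm_num [spin, hx, h] at hs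

lemma Nplus_snoc (σ : Config m) (b : Bool) :
    Nplus (snoc σ b) = Nplus σ + if b then 1 else 0 := by
  have hfilter : {x ∈ Icc 1 m | spin (snoc σ b) x = 1} = {x ∈ Icc 1 m | spin σ x = 1} :=
    filter_congr fun x hx => by rw [spin_snoc_of_le σ b (mem_Icc.1 hx).2]
  rw [Nplus_eq_card_spin, Nplus_eq_card_spin, ← insert_Icc_right_eq_Icc_add_one (by omega),
    filter_insert, hfilter, spin_snoc_self]
  cases b <;> norm_num

-- `1 ≤ m` is needed because off the box `spin` is `1`, not the boundary value `-1`.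
lemma Hminus_snoc (I : ℝ) (hm : 1 ≤ m) (σ : Config m) (b : Bool) :
    Hminus I (m + 1) (snoc σ b) = Hminus I m σ
      + I * ((if spin σ m ≠ spin (snoc σ b) (m + 1) then 1 else 0)
        + (if spin (snoc σ b) (m + 1) ≠ -1 then 1 else 0)
        - (if spin σ m ≠ -1 then 1 else 0)) := by
  have hbulk : ∀ x ∈ Icc 2 m,
      spin (snoc σ b) (x - 1) = spin σ (x - 1) ∧ spin (snoc σ b) x = spin σ x :=
    fun x hx => ⟨spin_snoc_of_le σ b (by simp only [mem_Icc] at hx; omega),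
      spin_snoc_of_le σ b (mem_Icc.1 hx).2⟩
  rw [Hminus, Hminus, sum_Icc_succ_top (by omega), Nat.add_sub_cancel,
    spin_snoc_of_le σ b le_rfl, spin_snoc_of_le σ b hm,
    sum_congr rfl fun x hx => by rw [(hbulk x hx).1, (hbulk x hx).2]]
  ring

lemma exp_Hminus_snoc_false (β I : ℝ) (hm : 1 ≤ m) (σ : Config m) :
    Real.exp (-β * Hminus I (m + 1) (snoc σ false)) = Real.exp (-β * Hminus I m σ) := by
  rw [Hminus_snoc I hm σ, spin_snoc_self]
  rcases spin_eq_one_or_neg_one σ m with h | h <;> norm_num [h]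

lemma exp_Hminus_snoc_true (β I : ℝ) (hm : 1 ≤ m) (σ : Config m) :
    Real.exp (-β * Hminus I (m + 1) (snoc σ true)) =
      Real.exp (-β * Hminus I m σ) * if spin σ m = 1 then 1 else Real.exp (-2 * β * I) := by
  rw [Hminus_snoc I hm σ, spin_snoc_self]
  rcases spin_eq_one_or_neg_one σ m with h | h <;> norm_num [h]
  rw [← Real.exp_add]
  ring_nf

/-- The part of `X β I n r` contributed by the configurations whose last spin is `-1`. -/
noncomputable def Xminus (β I : ℝ) (n : ℕ) (r : ℤ) : ℝ :=
  ∑ σ ∈ univ.filter (fun σ : Config n => (Nplus σ : ℤ) = r ∧ spin σ n = -1),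
    Real.exp (-β * Hminus I n σ)

lemma X_succ (β I : ℝ) (hm : 1 ≤ m) (r : ℤ) :
    X β I (m + 1) r = X β I m r + X β I m (r - 1)
      + (Real.exp (-2 * β * I) - 1) * Xminus β I m (r - 1) := by
  simp only [X, Xminus, sum_filter]
  rw [Config.sum_succ, mul_sum, ← sum_add_distrib, ← sum_add_distrib]
  refine sum_congr rfl fun σ _ => ?_
  rw [Nplus_snoc, Nplus_snoc, exp_Hminus_snoc_true β I hm, exp_Hminus_snoc_false β I hm]
  rcases spin_eq_one_or_neg_one σ m with h | h <;> norm_num [h] <;> split_ifs <;>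
    first | omega | ring

lemma Xminus_succ (β I : ℝ) (hm : 1 ≤ m) (r : ℤ) : Xminus β I (m + 1) r = X β I m r := by
  simp only [X, Xminus, sum_filter]
  rw [Config.sum_succ]
  refine sum_congr rfl fun σ _ => ?_
  rw [Nplus_snoc, Nplus_snoc, exp_Hminus_snoc_false β I hm, spin_snoc_self, spin_snoc_self]
  norm_num

end

theorem stmt_9_general (β I : ℝ) (n : ℕ) (hn : 3 ≤ n)
    (r : ℤ) :
    X β I n r = X β I (n - 1) (r - 1) + X β I (n - 1) r
        + (Real.exp (-2 * β * I) - 1) * X β I (n - 2) (r - 1) := by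
  obtain ⟨m, rfl⟩ : ∃ m, n = m + 2 := ⟨n - 2, by omega⟩
  rw [show m + 2 - 1 = m + 1 by omega, Nat.add_sub_cancel, X_succ β I (by omega),
    Xminus_succ β I (by omega)]
  ring

/-- The recursive equation (19) for the crystal partition functions `X^r_n`
of the Ising model, with `χ = e^{-2βI}` (here `X^s_{n'} = 0` automatically
whenever `s < 0` or `s > n'`). -/
theorem stmt_9 (β I : ℝ) (hβ : 0 < β) (n : ℕ) (hn : 3 ≤ n)
    (r : ℤ) (hr0 : 1 ≤ r) (hr1 : r ≤ (n : ℤ)) :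
    X β I n r = X β I (n - 1) (r - 1) + X β I (n - 1) r
        + (Real.exp (-2 * β * I) - 1) * X β I (n - 2) (r - 1) :=
  stmt_9_general β I n hn r
end

section
/- Consider the Ising model, i.e. I_x = I for all x ∈ ℤ with a fixed real I, let β > 0 and χ = e^{−2β I}. Then for all integers n ≥ 1 and 1 ≤ r ≤ n, the crystal partition function with minus boundary conditions has the closed form X^r_n = Σ_{k=1}^{r} C(n−r+1, k)·C(r−1, k−1)·χ^k, where C(a,b) is the binomial coefficient (equal to 0 when b > a). -/
open Finset

/-!
With minus spins on both sides, the domain walls of `σ` come in pairs, one at each end of a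
maximal run of plus spins, so `exp (-β H^-(σ)) = χ ^ k` with `k` the number of plus runs, i.e.
the number of ascents `-+` of the spin sequence framed by minus spins. Splitting off the first
site gives a transfer recursion for the `χ`-weighted counts of strings with `r` plus spins
preceded by a plus, resp. a minus, spin; the closed forms
`∑ₘ C(n - r, m) C(r, m) χᵐ` and `∑ₘ C(n - r, m + 1) C(r, m) χᵐ⁺¹` (the latter for `r + 1` plus
spins) satisfy the same recursion by Pascal's rule.
-/

namespace Ising

def ascents (s : ℕ → Bool) (N : ℕ) : ℕ := ∑ x ∈ range N, (!s x && s (x + 1)).toNat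

def walls (s : ℕ → Bool) (N : ℕ) : ℕ := ∑ x ∈ range N, (s x != s (x + 1)).toNat

theorem walls_add_toNat (s : ℕ → Bool) (N : ℕ) :
    walls s N + (s N).toNat = 2 * ascents s N + (s 0).toNat := by
  induction N with
  | zero => simp [walls, ascents]
  | succ N ih =>
    simp only [walls, ascents, sum_range_succ] at ih ⊢
    cases h : s N <;> cases s (N + 1) <;> simp [h] at ih ⊢ <;> omega

theorem ascents_succ (s : ℕ → Bool) (N : ℕ) :
    ascents s (N + 1) = (!s 0 && s 1).toNat + ascents (fun x => s (x + 1)) N := by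
  simp only [ascents, sum_range_succ']
  ring

/-- The sequence `p, τ 0, …, τ (n - 1), false, false, …`: position `x ∈ [1, n]` carries the
spin of site `x` of `Config n`. -/
def withBoundary {n : ℕ} (p : Bool) (τ : Fin n → Bool) : ℕ → Bool
  | 0 => p
  | x + 1 => if h : x < n then τ ⟨x, h⟩ else false

theorem withBoundary_cons_succ {n : ℕ} (p b : Bool) (τ : Fin n → Bool) (x : ℕ) :
    withBoundary p (Fin.cons b τ : Fin (n + 1) → Bool) (x + 1) = withBoundary b τ x := by
  cases x with
  | zero => simp [withBoundary]
  | succ x =>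
    simp only [withBoundary, Nat.add_lt_add_iff_right]
    split_ifs <;> rfl

theorem ascents_withBoundary_cons {n : ℕ} (p b : Bool) (τ : Fin n → Bool) :
    ascents (withBoundary p (Fin.cons b τ : Fin (n + 1) → Bool)) (n + 2)
      = (!p && b).toNat + ascents (withBoundary b τ) (n + 1) := by
  simp only [ascents_succ, withBoundary_cons_succ]
  rfl

def trueCount {n : ℕ} (τ : Fin n → Bool) : ℕ := #{i | τ i = true}

theorem trueCount_cons {n : ℕ} (b : Bool) (τ : Fin n → Bool) :
    trueCount (Fin.cons b τ : Fin (n + 1) → Bool) = b.toNat + trueCount τ := by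
  simp only [trueCount, card_filter, Fin.sum_univ_succ, Fin.cons_zero, Fin.cons_succ]
  cases b <;> rfl

theorem trueCount_le {n : ℕ} (τ : Fin n → Bool) : trueCount τ ≤ n :=
  (card_filter_le _ _).trans_eq (card_fin n)

section TransferRecursion

variable {R : Type*} [CommSemiring R]

def ascentSum (c : R) (n : ℕ) (p : Bool) (r : ℕ) : R :=
  ∑ τ : Fin n → Bool with trueCount τ = r, c ^ ascents (withBoundary p τ) (n + 1)

theorem ascentSum_of_lt (c : R) {n r : ℕ} (p : Bool) (h : n < r) : ascentSum c n p r = 0 :=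
  sum_eq_zero fun τ hτ => absurd (mem_filter.1 hτ).2 (by have := trueCount_le τ; omega)

theorem ascentSum_zero (c : R) (n : ℕ) (p : Bool) : ascentSum c n p 0 = 1 := by
  have : ({τ : Fin n → Bool | trueCount τ = 0} : Finset _) = {fun _ => false} := by
    ext τ
    simp [trueCount, filter_eq_empty_iff, funext_iff]
  simp [ascentSum, this, ascents, withBoundary]

theorem ascentSum_succ_succ (c : R) (n : ℕ) (p : Bool) (r : ℕ) :
    ascentSum c (n + 1) p (r + 1)
      = (if p then 1 else c) * ascentSum c n true r + ascentSum c n false (r + 1) := by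
  simp only [ascentSum, sum_filter, mul_sum]
  have hcons (x : Bool × (Fin n → Bool)) : Fin.consEquiv (fun _ => Bool) x = Fin.cons x.1 x.2 :=
    rfl
  rw [← (Fin.consEquiv fun _ => Bool).sum_comp, Fintype.sum_prod_type, Fintype.sum_bool]
  simp only [hcons, trueCount_cons, ascents_withBoundary_cons]
  congr 1 <;> refine sum_congr rfl fun τ _ => ?_
  · cases p <;> simp [pow_add, add_comm]
  · simp

/-- Closed form of `ascentSum c n true r`, with `z = n - r`. -/
def closedFormTrue (c : R) (z r : ℕ) : R :=
  ∑ m ∈ range (r + 1), (z.choose m * r.choose m : R) * c ^ m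

/-- Closed form of `ascentSum c n false (r + 1)`, with `z = n - r`. -/
def closedFormFalse (c : R) (z r : ℕ) : R :=
  ∑ m ∈ range (r + 1), (z.choose (m + 1) * r.choose m : R) * c ^ (m + 1)

theorem closedFormTrue_succ_right (c : R) (z r : ℕ) :
    closedFormTrue c z (r + 1) = closedFormTrue c z r + closedFormFalse c z r := by
  have hextend : closedFormTrue c z r
      = ∑ m ∈ range (r + 2), (z.choose m * r.choose m : R) * c ^ m := by
    simp [closedFormTrue, sum_range_succ _ (r + 1)]
  rw [hextend, closedFormTrue, sum_range_succ', sum_range_succ' _ (r + 1), closedFormFalse]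
  simp only [Nat.choose_succ_succ', Nat.choose_zero_right, Nat.cast_add, add_mul, mul_add,
    sum_add_distrib]
  abel

theorem closedFormFalse_succ_left (c : R) (z r : ℕ) :
    closedFormFalse c (z + 1) r = c * closedFormTrue c z r + closedFormFalse c z r := by
  simp only [closedFormFalse, closedFormTrue, mul_sum, ← sum_add_distrib, Nat.choose_succ_succ',
    Nat.cast_add]
  refine sum_congr rfl fun m _ => ?_
  ring

theorem ascentSum_eq_closedForm (c : R) (n : ℕ) :
    (∀ r ≤ n, ascentSum c n true r = closedFormTrue c (n - r) r) ∧
      ∀ r ≤ n, ascentSum c n false (r + 1) = closedFormFalse c (n - r) r := by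
  induction n with
  | zero =>
    refine ⟨fun r hr => ?_, fun r hr => ?_⟩ <;> obtain rfl : r = 0 := by omega
    · simp [ascentSum_zero, closedFormTrue]
    · simp [ascentSum_of_lt, closedFormFalse]
  | succ n ih =>
    obtain ⟨ih_true, ih_false⟩ := ih
    refine ⟨fun r hr => ?_, fun r hr => ?_⟩
    · cases r with
      | zero => simp [ascentSum_zero, closedFormTrue]
      | succ r =>
        rw [ascentSum_succ_succ, if_pos rfl, one_mul, ih_true r (by omega),
          ih_false r (by omega), Nat.add_sub_add_right, closedFormTrue_succ_right]
    · rcases hr.lt_or_eq with hr | rfl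
      · rw [ascentSum_succ_succ, if_neg Bool.false_ne_true, ih_true r (by omega),
          ih_false r (by omega), Nat.sub_add_comm (by omega), closedFormFalse_succ_left]
      · simp [ascentSum_of_lt, closedFormFalse]

theorem ascentSum_false_eq_sum_Icc (c : R) {n r : ℕ} (hr₀ : 1 ≤ r) (hr : r ≤ n) :
    ascentSum c n false r
      = ∑ k ∈ Icc 1 r, ((n - r + 1).choose k * (r - 1).choose (k - 1) : R) * c ^ k := by
  obtain ⟨s, rfl⟩ : ∃ s, r = s + 1 := ⟨r - 1, by omega⟩
  rw [(ascentSum_eq_closedForm c n).2 s (by omega), closedFormFalse, range_eq_Ico,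
    ← Ico_add_one_right_eq_Icc, ← sum_Ico_add' _ 0 (s + 1) 1, show n - (s + 1) + 1 = n - s by omega]
  simp

end TransferRecursion

def siteEquiv (n : ℕ) : Fin n ≃ {x // x ∈ Icc 1 n} where
  toFun i := ⟨i + 1, by simp⟩
  invFun x := ⟨x - 1, by have := mem_Icc.1 x.2; omega⟩
  left_inv i := by simp
  right_inv x := by have := mem_Icc.1 x.2; ext; simp; omega

def configEquiv (n : ℕ) : (Fin n → Bool) ≃ Config n := (siteEquiv n).arrowCongr (Equiv.refl Bool)

theorem Nplus_configEquiv {n : ℕ} (τ : Fin n → Bool) : Nplus (configEquiv n τ) = trueCount τ :=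
  (card_equiv (siteEquiv n) (by simp [configEquiv])).symm

theorem spin_configEquiv {n x : ℕ} (τ : Fin n → Bool) (h₁ : 1 ≤ x) (h₂ : x ≤ n) :
    spin (configEquiv n τ) x = if withBoundary false τ x then 1 else -1 := by
  obtain ⟨y, rfl⟩ : ∃ y, x = y + 1 := ⟨x - 1, by omega⟩
  simp [spin, configEquiv, withBoundary, siteEquiv, h₂, show y < n by omega]

theorem Hminus_configEquiv (I : ℝ) {n : ℕ} (hn : 1 ≤ n) (τ : Fin n → Bool) :
    Hminus I n (configEquiv n τ) = I * walls (withBoundary false τ) (n + 1) := by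
  set w := withBoundary false τ
  set σ := configEquiv n τ
  have hspin (x : ℕ) (h₁ : 1 ≤ x) (h₂ : x ≤ n) : spin σ x = if w x then 1 else -1 :=
    spin_configEquiv τ h₁ h₂
  have hwall (a b : Bool) :
      (if (if a then 1 else -1 : ℝ) ≠ (if b then 1 else -1) then 1 else 0 : ℝ) = (a != b).toNat := by
    cases a <;> cases b <;> norm_num
  have hbulk : ∑ x ∈ Icc 2 n, (if spin σ (x - 1) ≠ spin σ x then 1 else 0 : ℝ)
      = ∑ x ∈ Ico 1 n, ((w x != w (x + 1)).toNat : ℝ) := by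
    rw [← Ico_add_one_right_eq_Icc, ← sum_Ico_add' _ 1 n 1]
    refine sum_congr rfl fun x hx => ?_
    have := mem_Ico.1 hx
    rw [Nat.add_sub_cancel, hspin x (by omega) (by omega), hspin (x + 1) (by omega) (by omega),
      hwall]
  have hfirst : (if spin σ 1 ≠ -1 then 1 else 0 : ℝ) = (w 0 != w 1).toNat := by
    rw [hspin 1 le_rfl hn, ← hwall, show w 0 = false from rfl, if_neg Bool.false_ne_true]
    exact if_congr ne_comm rfl rfl
  have hlast : (if spin σ n ≠ -1 then 1 else 0 : ℝ) = (w n != w (n + 1)).toNat := by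
    rw [hspin n hn le_rfl, ← hwall, show w (n + 1) = false by simp [w, withBoundary],
      if_neg Bool.false_ne_true]
  rw [Hminus, hbulk, hfirst, hlast, walls, Nat.cast_sum, sum_range_succ, range_eq_Ico,
    sum_eq_sum_Ico_succ_bot hn]
  ring

theorem walls_withBoundary_false {n : ℕ} (τ : Fin n → Bool) :
    walls (withBoundary false τ) (n + 1) = 2 * ascents (withBoundary false τ) (n + 1) := by
  simpa [withBoundary] using walls_add_toNat (withBoundary false τ) (n + 1)

theorem X_eq_ascentSum (β I : ℝ) {n : ℕ} (hn : 1 ≤ n) (r : ℕ) :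
    X β I n r = ascentSum (Real.exp (-2 * β * I)) n false r := by
  rw [X, ascentSum, sum_filter, sum_filter]
  refine (Fintype.sum_equiv (configEquiv n) _ _ fun τ => ?_).symm
  rw [Nplus_configEquiv, Hminus_configEquiv I hn, walls_withBoundary_false, ← Real.exp_nat_mul]
  simp only [Nat.cast_inj, Nat.cast_mul, Nat.cast_ofNat]
  ring_nf

end Ising

theorem stmt_11_general (β I : ℝ) (n : ℕ) (hn : 1 ≤ n)
    (r : ℕ) (hr0 : 1 ≤ r) (hr1 : r ≤ n) :
    X β I n (r : ℤ) = ∑ k ∈ Finset.Icc 1 r,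
      ((n - r + 1).choose k : ℝ) * ((r - 1).choose (k - 1) : ℝ)
        * Real.exp (-2 * β * I) ^ k := by
  rw [Ising.X_eq_ascentSum β I hn, Ising.ascentSum_false_eq_sum_Icc _ hr0 hr1]

/-- The closed form (22) for the crystal partition function of the Ising model:
`X^r_n = ∑_{k=1}^r C(n-r+1, k) C(r-1, k-1) χ^k` with `χ = e^{-2βI}`. -/
theorem stmt_11 (β I : ℝ) (hβ : 0 < β) (n : ℕ) (hn : 1 ≤ n)
    (r : ℕ) (hr0 : 1 ≤ r) (hr1 : r ≤ n) :
    X β I n (r : ℤ) = ∑ k ∈ Finset.Icc 1 r,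
      ((n - r + 1).choose k : ℝ) * ((r - 1).choose (k - 1) : ℝ)
        * Real.exp (-2 * β * I) ^ k :=
  stmt_11_general β I n hn r hr0 hr1
end
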